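/- Let J ⊆ {1,…,p}, suppose Σ̂_J is symmetric positive definite, and let η = n^{-1}Σ̂_J^{-1}x_{n+1,J}/(1 + n^{-1}x_{n+1,J}'Σ̂_J^{-1}x_{n+1,J}). Suppose that on an interval [t_k, t_{k+1}] the augmented Lasso solution satisfies β̂_{J^c}(t) = 0 and β̂_J(t) = β̂_J(t_k) + η(t − t_k), and define the fitted residuals r_i(t) = y_i − x_i'β̂(t) for 1 ≤ i ≤ n and r_{n+1}(t) = x_{n+1}'β̂(0) + t − x_{n+1}'β̂(t). Then for all t ∈ [t_k, t_{k+1}]: r_i(t) = r_i(t_k) − [n^{-1}x_{i,J}'Σ̂_J^{-1}x_{n+1,J}/(1 + n^{-1}x_{n+1,J}'Σ̂_J^{-1}x_{n+1,J})](t − t_k) for each 1 ≤ i ≤ n, and r_{n+1}(t) = r_{n+1}(t_k) + [1/(1 + n^{-1}x_{n+1,J}'Σ̂_J^{-1}x_{n+1,J})](t − t_k). -/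

import Mathlib

/-!
On the piece, `β̂(t) = β̂(t_k) + (t - t_k) η` with `η` supported on `J`, so every fitted value
`x'β̂(t)` moves with slope `x'η = n⁻¹x_J'Σ̂_J⁻¹x_{n+1,J} / d`. For the augmented point the extra `+ t`
gives slope `1 - x_{n+1}'η = 1/d`, where `d = 1 + n⁻¹x_{n+1,J}'Σ̂_J⁻¹x_{n+1,J}` is positive because
`Σ̂_J⁻¹` is positive semidefinite.
-/

open scoped BigOperators Matrix

noncomputable section

/-- Euclidean inner product on `Fin p → ℝ`. -/
def dotp {p : ℕ} (a b : Fin p → ℝ) : ℝ := ∑ j, a j * b j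

/-- The Lasso objective `F(β) = (1/2)∑ᵢ (yᵢ − xᵢ'β)² + λ‖β‖₁`. -/
def lassoObj {n p : ℕ} (x : Fin n → Fin p → ℝ) (y : Fin n → ℝ) (lam : ℝ)
    (β : Fin p → ℝ) : ℝ :=
  (1 / 2) * ∑ i, (y i - dotp (x i) β) ^ 2 + lam * ∑ j, |β j|

/-- The augmented Lasso objective with `(x_{n+1}, ynew)` added as the `(n+1)`-th sample. -/
def augObj {n p : ℕ} (x : Fin n → Fin p → ℝ) (y : Fin n → ℝ) (xnew : Fin p → ℝ)
    (lam : ℝ) (ynew : ℝ) (β : Fin p → ℝ) : ℝ :=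
  lassoObj x y lam β + (1 / 2) * (ynew - dotp xnew β) ^ 2

/-- The submatrix `Σ̂_J` of the sample covariance matrix `Σ̂ = n⁻¹∑ᵢ xᵢxᵢ'`. -/
def gramJ {n p : ℕ} (x : Fin n → Fin p → ℝ) (J : Finset (Fin p)) : Matrix ↥J ↥J ℝ :=
  Matrix.of fun a b => (1 / (n : ℝ)) * ∑ i, x i a.1 * x i b.1

/-- The subvector `u_J` of `u` with coordinates in `J`. -/
def subv {p : ℕ} (u : Fin p → ℝ) (J : Finset (Fin p)) : ↥J → ℝ := fun a => u a.1

/-- `Σ̂_J⁻¹ x_{n+1,J}`. -/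
def invPart {n p : ℕ} (x : Fin n → Fin p → ℝ) (J : Finset (Fin p)) (xnew : Fin p → ℝ) :
    ↥J → ℝ :=
  (gramJ x J)⁻¹ *ᵥ subv xnew J

/-- The denominator `1 + n⁻¹ x_{n+1,J}'Σ̂_J⁻¹x_{n+1,J}`. -/
def denomC {n p : ℕ} (x : Fin n → Fin p → ℝ) (J : Finset (Fin p)) (xnew : Fin p → ℝ) : ℝ :=
  1 + (1 / (n : ℝ)) * (subv xnew J ⬝ᵥ invPart x J xnew)

/-- The slope vector `η = n⁻¹Σ̂_J⁻¹x_{n+1,J} / (1 + n⁻¹x_{n+1,J}'Σ̂_J⁻¹x_{n+1,J})`,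
extended by `0` off `J`. -/
def etaV {n p : ℕ} (x : Fin n → Fin p → ℝ) (J : Finset (Fin p)) (xnew : Fin p → ℝ) :
    Fin p → ℝ := fun j =>
  if h : j ∈ J then (1 / (n : ℝ)) * invPart x J xnew ⟨j, h⟩ / denomC x J xnew else 0

/-- The dual slope vector
`γ = (x_{n+1,J^c} − Σ̂_{J^c,J}Σ̂_J⁻¹x_{n+1,J}) / (1 + n⁻¹x_{n+1,J}'Σ̂_J⁻¹x_{n+1,J})`
(only its coordinates off `J` are used). -/
def gammaV {n p : ℕ} (x : Fin n → Fin p → ℝ) (J : Finset (Fin p)) (xnew : Fin p → ℝ) :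
    Fin p → ℝ := fun j =>
  (xnew j - ∑ a : ↥J, ((1 / (n : ℝ)) * ∑ i, x i j * x i a.1) * invPart x J xnew a) /
    denomC x J xnew

/-- `rpp a b` is `(a/b)₊₊ ∈ EReal`, the ratio `a/b` computed with the conventions
`0/0 = 0`, `z/0 = sign(z)·∞`, and then `(z)₊₊ = z` if `z > 0`, `(z)₊₊ = +∞` if `z ≤ 0`.
(When `b = 0` the result is always `+∞`, matching the conventions.) -/
def rpp (a b : ℝ) : EReal := if b ≠ 0 ∧ 0 < a / b then ((a / b : ℝ) : EReal) else ⊤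

/-- The first point of change
`t₁ = min_{j∈J}(−β̂_j/η_j)₊₊ ∧ min_{j∈J^c}((sign(γ_j)λ − v_j)/γ_j)₊₊`. -/
def tOne {n p : ℕ} (x : Fin n → Fin p → ℝ) (J : Finset (Fin p)) (xnew : Fin p → ℝ)
    (βhat v : Fin p → ℝ) (lam : ℝ) : EReal :=
  (J.inf fun j => rpp (-(βhat j)) (etaV x J xnew j)) ⊓
    (Jᶜ.inf fun j => rpp (Real.sign (gammaV x J xnew j) * lam - v j) (gammaV x J xnew j))

/-- The homotopy solution `β(t)`: `β(t)_J = β̂_J + t·η`, `β(t)_{J^c} = 0`. -/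
def betaT {n p : ℕ} (x : Fin n → Fin p → ℝ) (J : Finset (Fin p)) (xnew : Fin p → ℝ)
    (βhat : Fin p → ℝ) (t : ℝ) : Fin p → ℝ := fun j =>
  if j ∈ J then βhat j + t * etaV x J xnew j else 0

lemma dotProduct_inv_mulVec_self_nonneg {ι : Type*} [Fintype ι] [DecidableEq ι]
    {A : Matrix ι ι ℝ} (hA : A.PosSemidef) (v : ι → ℝ) : 0 ≤ v ⬝ᵥ (A⁻¹ *ᵥ v) := by
  simpa using hA.inv.dotProduct_mulVec_nonneg v

lemma dotp_add_smul {p : ℕ} (a b c : Fin p → ℝ) (s : ℝ) :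
    dotp a (b + s • c) = dotp a b + s * dotp a c := by
  change a ⬝ᵥ (b + s • c) = a ⬝ᵥ b + s * a ⬝ᵥ c
  rw [dotProduct_add, dotProduct_smul, smul_eq_mul]

section

variable {n p : ℕ} {x : Fin n → Fin p → ℝ} {J : Finset (Fin p)} {xnew : Fin p → ℝ}

lemma denomC_pos (hgram : (gramJ x J).PosSemidef) : 0 < denomC x J xnew := by
  have := dotProduct_inv_mulVec_self_nonneg hgram (subv xnew J)
  unfold denomC invPart
  positivity

lemma etaV_eq_zero {j : Fin p} (hj : j ∉ J) : etaV x J xnew j = 0 := dif_neg hj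

lemma dotp_etaV (a : Fin p → ℝ) :
    dotp a (etaV x J xnew) =
      1 / (n : ℝ) * (subv a J ⬝ᵥ invPart x J xnew) / denomC x J xnew := by
  rw [dotp, ← Finset.sum_subset (Finset.subset_univ J) fun j _ hj => by
      rw [etaV_eq_zero hj, mul_zero],
    ← Finset.sum_coe_sort, dotProduct, Finset.mul_sum, Finset.sum_div]
  refine Finset.sum_congr rfl fun j _ => ?_
  rw [etaV, dif_pos j.2, subv]
  ring

lemma one_sub_dotp_etaV_self (hgram : (gramJ x J).PosSemidef) :
    1 - dotp xnew (etaV x J xnew) = 1 / denomC x J xnew := by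
  rw [dotp_etaV, eq_div_iff (denomC_pos hgram).ne', sub_mul, div_mul_cancel₀ _ (denomC_pos hgram).ne']
  unfold denomC
  ring

end

/-- evolution of the fitted residuals along one linear piece of the homotopy.
If on `[t_k, t_{k+1}]` the augmented Lasso solution satisfies `β̂_{J^c}(t) = 0` and
`β̂_J(t) = β̂_J(t_k) + η(t − t_k)`, then for all `t ∈ [t_k, t_{k+1}]`:
`r_i(t) = r_i(t_k) − [n⁻¹x_{i,J}'Σ̂_J⁻¹x_{n+1,J}/(1 + n⁻¹x_{n+1,J}'Σ̂_J⁻¹x_{n+1,J})](t − t_k)`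
for `1 ≤ i ≤ n`, and
`r_{n+1}(t) = r_{n+1}(t_k) + [1/(1 + n⁻¹x_{n+1,J}'Σ̂_J⁻¹x_{n+1,J})](t − t_k)`. -/
theorem lasso_residual_evolution {n p : ℕ} (x : Fin n → Fin p → ℝ) (y : Fin n → ℝ)
    (xnew β0 : Fin p → ℝ) (J : Finset (Fin p)) (hpd : (gramJ x J).PosDef)
    (tk tk1 : ℝ) (B : ℝ → Fin p → ℝ)
    (hB : ∀ t ∈ Set.Icc tk tk1,
      (∀ j ∉ J, B t j = 0) ∧
      (∀ j ∈ J, B t j = B tk j + etaV x J xnew j * (t - tk))) :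
    ∀ t ∈ Set.Icc tk tk1,
      (∀ i, y i - dotp (x i) (B t) =
        (y i - dotp (x i) (B tk)) -
          ((1 / (n : ℝ)) * (subv (x i) J ⬝ᵥ invPart x J xnew) / denomC x J xnew) * (t - tk)) ∧
      dotp xnew β0 + t - dotp xnew (B t) =
        (dotp xnew β0 + tk - dotp xnew (B tk)) + (1 / denomC x J xnew) * (t - tk) := by
  intro t ht
  have htk : tk ∈ Set.Icc tk tk1 := ⟨le_rfl, ht.1.trans ht.2⟩
  have hpath : B t = B tk + (t - tk) • etaV x J xnew := by
    funext j
    by_cases hj : j ∈ J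
    · simp [(hB t ht).2 j hj, mul_comm]
    · simp [(hB t ht).1 j hj, (hB tk htk).1 j hj, etaV_eq_zero hj]
  refine ⟨fun i => ?_, ?_⟩
  · rw [hpath, dotp_add_smul, dotp_etaV]
    ring
  · rw [hpath, dotp_add_smul, ← one_sub_dotp_etaV_self hpd.posSemidef]
    ring
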